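/- Let X, Y be Hilbert spaces, T ∈ B(X,Y) with closed range and Moore–Penrose inverse T†, and δT ∈ B(X,Y) with ‖δT‖‖T†‖ < 1. If B := T†(I + δT T†)⁻¹ is a generalized inverse of T̄ := T + δT (i.e., T̄BT̄ = T̄ and BT̄B = B), then T̄ has closed range and Hyers–Ulam stability. -/

import Mathlib

/-! For `S = T + δT`, the inner-inverse identity `S B S = S` with `B` bounded gives both claims:
the range of `S` is the kernel of the continuous map `1 - S B`, and `x - B (S x)` lies in
`ker S` at distance `‖B (S x)‖ ≤ ‖B‖ ‖S x‖` from `x`. -/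

open ContinuousLinearMap

def HyersUlamStable {𝕜 E F : Type*} [NormedField 𝕜] [SeminormedAddCommGroup E]
    [SeminormedAddCommGroup F] [NormedSpace 𝕜 E] [NormedSpace 𝕜 F] (S : E →L[𝕜] F) : Prop :=
  ∃ K : ℝ, 0 < K ∧ ∀ x : E, ∃ x₀ ∈ LinearMap.ker (S : E →ₗ[𝕜] F), ‖x - x₀‖ ≤ K * ‖S x‖

namespace ContinuousLinearMap

variable {𝕜 E F : Type*} [NontriviallyNormedField 𝕜] [SeminormedAddCommGroup E]
  [SeminormedAddCommGroup F] [NormedSpace 𝕜 E] [NormedSpace 𝕜 F]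
  {S : E →L[𝕜] F} {B : F →L[𝕜] E}

theorem range_eq_ker_one_sub_comp_of_comp_comp_eq_self (h : S ∘L B ∘L S = S) :
    LinearMap.range (S : E →ₗ[𝕜] F) = LinearMap.ker ((1 - S ∘L B : F →L[𝕜] F) : F →ₗ[𝕜] F) := by
  ext y
  simp only [LinearMap.mem_range, coe_coe, LinearMap.mem_ker, sub_apply, comp_apply,
    sub_eq_zero]
  constructor
  · rintro ⟨x, rfl⟩
    exact (congrArg (· x) h).symm
  · exact fun hy => ⟨B y, hy.symm⟩

theorem isClosed_range_of_comp_comp_eq_self [T1Space F] (h : S ∘L B ∘L S = S) :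
    IsClosed (LinearMap.range (S : E →ₗ[𝕜] F) : Set F) := by
  rw [range_eq_ker_one_sub_comp_of_comp_comp_eq_self h]
  exact isClosed_ker _

theorem hyersUlamStable_of_comp_comp_eq_self (h : S ∘L B ∘L S = S) : HyersUlamStable S := by
  refine ⟨‖B‖ + 1, by positivity, fun x => ⟨x - B (S x), ?_, ?_⟩⟩
  · rw [LinearMap.mem_ker, coe_coe, map_sub, ← comp_apply, ← comp_apply, comp_assoc, h,
      sub_self]
  · calc ‖x - (x - B (S x))‖ = ‖B (S x)‖ := by rw [sub_sub_cancel]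
      _ ≤ ‖B‖ * ‖S x‖ := B.le_opNorm _
      _ ≤ (‖B‖ + 1) * ‖S x‖ := by gcongr; linarith

end ContinuousLinearMap

theorem perturbed_closed_range_and_stability_general
    {X Y : Type*} [NormedAddCommGroup X] [InnerProductSpace ℝ X]
    [NormedAddCommGroup Y] [InnerProductSpace ℝ Y]
    (T : X →L[ℝ] Y) (T' : Y →L[ℝ] X) (δT : X →L[ℝ] Y)
    (hgi1 : (T + δT) ∘L (T' ∘L Ring.inverse (1 + δT ∘L T')) ∘L (T + δT) = T + δT) :
    IsClosed (LinearMap.range ((T + δT : X →L[ℝ] Y) : X →ₗ[ℝ] Y) : Set Y) ∧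
      ∃ K : ℝ, 0 < K ∧ ∀ x : X, ∃ x₀ ∈ LinearMap.ker ((T + δT : X →L[ℝ] Y) : X →ₗ[ℝ] Y),
        ‖x - x₀‖ ≤ K * ‖(T + δT) x‖ :=
  ⟨isClosed_range_of_comp_comp_eq_self hgi1, hyersUlamStable_of_comp_comp_eq_self hgi1⟩

/-- If `B = T†(I + δT T†)⁻¹` is a generalized inverse of `T̄ = T + δT`, then
`T̄` has closed range and Hyers--Ulam stability. -/
theorem perturbed_closed_range_and_stability
    {X Y : Type*} [NormedAddCommGroup X] [InnerProductSpace ℝ X] [CompleteSpace X]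
    [NormedAddCommGroup Y] [InnerProductSpace ℝ Y] [CompleteSpace Y]
    (T : X →L[ℝ] Y) (T' : Y →L[ℝ] X) (δT : X →L[ℝ] Y)
    (hclosed : IsClosed (LinearMap.range (T : X →ₗ[ℝ] Y) : Set Y))
    (h1 : T ∘L T' ∘L T = T) (h2 : T' ∘L T ∘L T' = T')
    (h3 : adjoint (T ∘L T') = T ∘L T') (h4 : adjoint (T' ∘L T) = T' ∘L T)
    (hsmall : ‖δT‖ * ‖T'‖ < 1)
    (hgi1 : (T + δT) ∘L (T' ∘L Ring.inverse (1 + δT ∘L T')) ∘L (T + δT) = T + δT)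
    (hgi2 : (T' ∘L Ring.inverse (1 + δT ∘L T')) ∘L (T + δT) ∘L
        (T' ∘L Ring.inverse (1 + δT ∘L T')) = T' ∘L Ring.inverse (1 + δT ∘L T')) :
    IsClosed (LinearMap.range ((T + δT : X →L[ℝ] Y) : X →ₗ[ℝ] Y) : Set Y) ∧
      ∃ K : ℝ, 0 < K ∧ ∀ x : X, ∃ x₀ ∈ LinearMap.ker ((T + δT : X →L[ℝ] Y) : X →ₗ[ℝ] Y),
        ‖x - x₀‖ ≤ K * ‖(T + δT) x‖ :=
  perturbed_closed_range_and_stability_general T T' δT hgi1
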